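/- arXiv:0907.2295 — 5 statements merged into one kernel-verified Lean document; each statement's English description precedes it below -/
import Mathlib

section
/- If X : ℝ⁺ → ℝ is a zero-mean second-order process that is wide-sense (H, α^T)-discrete-scale-invariant (i.e., E[X(α^T t₁) X(α^T t₂)] = α^{2TH} E[X(t₁)X(t₂)] for all t₁, t₂ > 0), then Y(t) = α^{-tH} X(α^t) has covariance function R_Y(t+τ, s+τ) that is periodic in the shift with period T: E[Y(t+T)Y(s+T)] = E[Y(t)Y(s)] for all t, s ∈ ℝ. -/
open MeasureTheory

theorem inverse_lamperti_of_DSI_is_periodically_correlated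
    {Ω : Type*} [MeasurableSpace Ω] (μ : Measure Ω) [IsProbabilityMeasure μ]
    (H α : ℝ) (T : ℕ) (hH : 0 < H) (hα : 1 < α) (hT : 0 < T)
    (X : ℝ → Ω → ℝ)
    (hmean : ∀ t : ℝ, 0 < t → ∫ ω, X t ω ∂μ = 0)
    (hDSI : ∀ t₁ : ℝ, 0 < t₁ → ∀ t₂ : ℝ, 0 < t₂ →
      ∫ ω, X (α ^ (T : ℝ) * t₁) ω * X (α ^ (T : ℝ) * t₂) ω ∂μ
        = α ^ (2 * (T : ℝ) * H) * ∫ ω, X t₁ ω * X t₂ ω ∂μ) :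
    ∀ t s : ℝ,
      ∫ ω, (α ^ (-((t + (T : ℝ)) * H)) * X (α ^ (t + (T : ℝ))) ω) *
            (α ^ (-((s + (T : ℝ)) * H)) * X (α ^ (s + (T : ℝ))) ω) ∂μ
        = ∫ ω, (α ^ (-(t * H)) * X (α ^ t) ω) *
                (α ^ (-(s * H)) * X (α ^ s) ω) ∂μ := by
  intro t s
  have hα0 : (0:ℝ) < α := lt_trans one_pos hα
  have hkey := hDSI (α ^ t) (Real.rpow_pos_of_pos hα0 t)
    (α ^ s) (Real.rpow_pos_of_pos hα0 s)
  have hadd : ∀ u : ℝ, α ^ (u + (T : ℝ)) = α ^ (T : ℝ) * α ^ u := by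
    intro u
    rw [Real.rpow_add hα0, mul_comm]
  calc
    ∫ ω, (α ^ (-((t + (T : ℝ)) * H)) * X (α ^ (t + (T : ℝ))) ω) *
          (α ^ (-((s + (T : ℝ)) * H)) * X (α ^ (s + (T : ℝ))) ω) ∂μ
      = α ^ (-((t + (T : ℝ)) * H)) * α ^ (-((s + (T : ℝ)) * H)) *
          ∫ ω, X (α ^ (T : ℝ) * α ^ t) ω * X (α ^ (T : ℝ) * α ^ s) ω ∂μ := by
        rw [hadd t, hadd s, ← integral_const_mul]
        congr 1
        ext ω
        ring
    _ = α ^ (-((t + (T : ℝ)) * H)) * α ^ (-((s + (T : ℝ)) * H)) *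
          (α ^ (2 * (T : ℝ) * H) * ∫ ω, X (α ^ t) ω * X (α ^ s) ω ∂μ) := by
        rw [hkey]
    _ = α ^ (-(t * H)) * α ^ (-(s * H)) *
          ∫ ω, X (α ^ t) ω * X (α ^ s) ω ∂μ := by
        rw [← Real.rpow_add hα0, ← mul_assoc, ← Real.rpow_add hα0,
          ← Real.rpow_add hα0]
        congr 2
        ring
    _ = ∫ ω, (α ^ (-(t * H)) * X (α ^ t) ω) *
          (α ^ (-(s * H)) * X (α ^ s) ω) ∂μ := by
        rw [← integral_const_mul]
        congr 1
        ext ω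
        ring
end

section
/- Let X(α^n), n ∈ ℤ, be a zero-mean Gaussian (or wide-sense Markov) DT-SIM process with scale α^T whose covariance factors as R_n^H(τ) = G(α^n) K(α^{n+τ}) for τ ≥ 0 with R_n^H(τ) ≠ 0. Then for k ≥ 0 and v ∈ {0,…,T−1}, R_n^H(kT+v) = [h̃(α^{T−1})]^k · h̃(α^{v+n−1}) · [h̃(α^{n−1})]^{−1} · R_n^H(0), where h̃(α^r) = ∏_{j=0}^{r} R_j^H(1)/R_j^H(0) and h̃(α^{−1}) = 1. -/
/-!
By the Markov factorization `R n τ = G(α^n) K(α^(n+τ))`, the ratio `R n (τ+1) / R n τ` equals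
`K(α^(n+τ+1)) / K(α^(n+τ)) = R (n+τ) 1 / R (n+τ) 0`, so `R n τ` is `R n 0` times a product of
`τ` consecutive one-step ratios `h(n), …, h(n+τ-1)`. Discrete scale invariance multiplies both
`R (m+T) 1` and `R (m+T) 0` by the same nonzero factor, so `h` is `T`-periodic, and a product
of `kT + v` consecutive values of a `T`-periodic sequence starting at `n` is the `k`-th power of
a full period times the product of the `v` values starting at `n`, which is the quotient
`h̃(α^(v+n-1)) / h̃(α^(n-1))`.
-/

/-- `htil R r` represents `h̃(α^r) = ∏_{j=0}^{r} R_j^H(1)/R_j^H(0)` for `r ≥ 0`,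
with `htil R (-1) = 1` (empty product). -/
noncomputable def htil (R : ℕ → ℕ → ℝ) (r : ℤ) : ℝ :=
  ∏ j ∈ Finset.range (r + 1).toNat, R j 1 / R j 0

open Finset Function

namespace Function.Periodic

variable {M : Type*} [CommMonoid M] {f : ℕ → M} {T : ℕ}

theorem prod_range_add_left (hf : Periodic f T) (m : ℕ) :
    ∏ j ∈ range T, f (m + j) = ∏ j ∈ range T, f j := by
  have hmod := congr_arg (fun s => (s.map f).prod) (Nat.multiset_Ico_map_mod m T)
  simp only [Multiset.map_map, comp_def, hf.map_mod_nat] at hmod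
  calc ∏ j ∈ range T, f (m + j) = ∏ i ∈ Ico m (m + T), f i := by
        rw [prod_Ico_eq_prod_range, Nat.add_sub_cancel_left]
    _ = ∏ j ∈ range T, f j := hmod

theorem prod_range_mul_add (hf : Periodic f T) (m k v : ℕ) :
    ∏ j ∈ range (k * T + v), f (m + j) = (∏ j ∈ range T, f j) ^ k * ∏ j ∈ range v, f (m + j) := by
  induction k with
  | zero => simp
  | succ k ih =>
    have hshift : ∀ j, f (m + (T + j)) = f (m + j) := fun j => by
      rw [add_left_comm, add_comm T, hf]
    rw [show (k + 1) * T + v = T + (k * T + v) by ring, prod_range_add, hf.prod_range_add_left,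
      funext hshift, ih, pow_succ', mul_assoc]

end Function.Periodic

/-- The one-step covariance ratio `h(α^j) = R_j^H(1) / R_j^H(0)`. -/
noncomputable def covRatio (R : ℕ → ℕ → ℝ) (j : ℕ) : ℝ := R j 1 / R j 0

theorem htil_natCast_sub_one (R : ℕ → ℕ → ℝ) (r : ℕ) :
    htil R ((r : ℤ) - 1) = ∏ j ∈ range r, covRatio R j := by
  simp [htil, covRatio]

section Covariance

variable {R : ℕ → ℕ → ℝ}

theorem covRatio_ne_zero (hne : ∀ n τ, R n τ ≠ 0) (j : ℕ) : covRatio R j ≠ 0 :=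
  div_ne_zero (hne j 1) (hne j 0)

theorem periodic_covRatio {T : ℕ} {c : ℝ} (hc : c ≠ 0) (hDSI : ∀ n τ, R (n + T) τ = c * R n τ) :
    Periodic (covRatio R) T := fun m => by
  simp only [covRatio, hDSI, mul_div_mul_left _ _ hc]

theorem cov_succ_eq_mul_covRatio {g k : ℕ → ℝ} (hfact : ∀ n τ, R n τ = g n * k (n + τ))
    (hne : ∀ n, R n 0 ≠ 0) (m τ : ℕ) : R m (τ + 1) = R m τ * covRatio R (m + τ) := by
  rw [covRatio, mul_div_assoc', eq_div_iff (hne _), hfact m (τ + 1), hfact (m + τ) 0,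
    hfact m τ, hfact (m + τ) 1]
  ring_nf

theorem cov_eq_prod_covRatio_mul {g k : ℕ → ℝ} (hfact : ∀ n τ, R n τ = g n * k (n + τ))
    (hne : ∀ n, R n 0 ≠ 0) (m τ : ℕ) :
    R m τ = (∏ j ∈ range τ, covRatio R (m + j)) * R m 0 := by
  induction τ with
  | zero => simp
  | succ τ ih => rw [cov_succ_eq_mul_covRatio hfact hne, ih, prod_range_succ]; ring

end Covariance

theorem DTSIM_covariance_structure_general
    (H α : ℝ) (T : ℕ)
    (R : ℕ → ℕ → ℝ) (G K : ℝ → ℝ)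
    (hfact : ∀ n τ : ℕ, R n τ = G (α ^ n) * K (α ^ (n + τ)))
    (hne : ∀ n τ : ℕ, R n τ ≠ 0)
    (hDSI : ∀ n τ : ℕ, R (n + T) τ = α ^ (2 * (T : ℝ) * H) * R n τ) :
    ∀ k n v : ℕ, n < T → v < T →
      R n (k * T + v)
        = (htil R ((T : ℤ) - 1)) ^ k * htil R ((v : ℤ) + (n : ℤ) - 1) *
          (htil R ((n : ℤ) - 1))⁻¹ * R n 0 := by
  intro k n v _ _
  have hc : α ^ (2 * (T : ℝ) * H) ≠ 0 :=
    left_ne_zero_of_mul (hDSI 0 0 ▸ hne (0 + T) 0)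
  have hper := periodic_covRatio hc hDSI
  have hprod_n : ∏ j ∈ range n, covRatio R j ≠ 0 :=
    prod_ne_zero_iff.mpr fun j _ => covRatio_ne_zero hne j
  have hvn : (v : ℤ) + n - 1 = ((n + v : ℕ) : ℤ) - 1 := by push_cast; ring
  rw [cov_eq_prod_covRatio_mul (g := fun n => G (α ^ n)) (k := fun m => K (α ^ m)) hfact
      (hne · 0), hper.prod_range_mul_add, hvn, htil_natCast_sub_one, htil_natCast_sub_one,
    htil_natCast_sub_one, prod_range_add]
  field_simp

theorem DTSIM_covariance_structure
    (H α : ℝ) (T : ℕ) (hH : 0 < H) (hα : 1 < α) (hT : 0 < T)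
    (R : ℕ → ℕ → ℝ) (G K : ℝ → ℝ)
    (hfact : ∀ n τ : ℕ, R n τ = G (α ^ n) * K (α ^ (n + τ)))
    (hne : ∀ n τ : ℕ, R n τ ≠ 0)
    (hDSI : ∀ n τ : ℕ, R (n + T) τ = α ^ (2 * (T : ℝ) * H) * R n τ) :
    ∀ k n v : ℕ, n < T → v < T →
      R n (k * T + v)
        = (htil R ((T : ℤ) - 1)) ^ k * htil R ((v : ℤ) + (n : ℤ) - 1) *
          (htil R ((n : ℤ) - 1))⁻¹ * R n 0 :=
  DTSIM_covariance_structure_general H α T R G K hfact hne hDSI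
end

section
/- The simple Brownian motion X is wide-sense (H, λ)-discrete-scale-invariant: for all t, s ≥ 1, Cov(X(λt), X(λs)) = λ^{2H} Cov(X(t), X(s)). -/
open MeasureTheory

/-- The simple Brownian motion `X(t) = Σ_{n≥1} λ^{n(H-1/2)} 1_{[λ^{n-1}, λ^n)}(t) B(t)`
(the sum is reindexed by `n ↦ n+1`). -/
noncomputable def simpleBM {Ω : Type*} (lam H : ℝ) (B : ℝ → Ω → ℝ) (t : ℝ) (ω : Ω) : ℝ :=
  ∑' n : ℕ, Set.indicator (Set.Ico (lam ^ n) (lam ^ (n + 1)))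
    (fun _ => lam ^ (((n : ℝ) + 1) * (H - 1 / 2)) * B t ω) t

lemma simpleBM_eq {Ω : Type*} (lam H : ℝ) (hlam : 1 < lam) (B : ℝ → Ω → ℝ)
    (t : ℝ) (n : ℕ) (h1 : lam ^ n ≤ t) (h2 : t < lam ^ (n + 1)) (ω : Ω) :
    simpleBM lam H B t ω = lam ^ (((n : ℝ) + 1) * (H - 1 / 2)) * B t ω := by
  have hl1 : (1 : ℝ) ≤ lam := hlam.le
  unfold simpleBM
  rw [tsum_eq_single n]
  · rw [Set.indicator_of_mem (Set.mem_Ico.mpr ⟨h1, h2⟩)]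
  · intro m hm
    apply Set.indicator_of_notMem
    rintro ⟨hm1, hm2⟩
    rcases lt_or_gt_of_ne hm with h | h
    · exact absurd (le_trans (pow_le_pow_right₀ hl1 h) h1) (not_le.mpr hm2)
    · exact absurd (le_trans (pow_le_pow_right₀ hl1 h) hm1) (not_le.mpr h2)

theorem simpleBM_is_DSI
    {Ω : Type*} [MeasurableSpace Ω] (μ : Measure Ω) [IsProbabilityMeasure μ]
    (lam H : ℝ) (hlam : 1 < lam) (hH : 0 < H)
    (B : ℝ → Ω → ℝ)
    (hBmean : ∀ t : ℝ, 0 ≤ t → ∫ ω, B t ω ∂μ = 0)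
    (hBcov : ∀ t s : ℝ, 0 ≤ t → 0 ≤ s → ∫ ω, B t ω * B s ω ∂μ = min t s) :
    ∀ t s : ℝ, 1 ≤ t → 1 ≤ s →
      (∫ ω, simpleBM lam H B (lam * t) ω * simpleBM lam H B (lam * s) ω ∂μ)
          - (∫ ω, simpleBM lam H B (lam * t) ω ∂μ) *
            (∫ ω, simpleBM lam H B (lam * s) ω ∂μ)
        = lam ^ (2 * H) *
          ((∫ ω, simpleBM lam H B t ω * simpleBM lam H B s ω ∂μ)
            - (∫ ω, simpleBM lam H B t ω ∂μ) * (∫ ω, simpleBM lam H B s ω ∂μ)) := by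
  intro t s ht hs
  have hl0 : (0 : ℝ) < lam := lt_trans one_pos hlam
  obtain ⟨n, hn1, hn2⟩ := exists_nat_pow_near ht hlam
  obtain ⟨m, hm1, hm2⟩ := exists_nat_pow_near hs hlam
  have hnt1 : lam ^ (n + 1) ≤ lam * t := by
    rw [pow_succ, mul_comm]; exact mul_le_mul_of_nonneg_left hn1 hl0.le
  have hnt2 : lam * t < lam ^ (n + 1 + 1) := by
    rw [pow_succ']; exact mul_lt_mul_of_pos_left hn2 hl0
  have hms1 : lam ^ (m + 1) ≤ lam * s := by
    rw [pow_succ, mul_comm]; exact mul_le_mul_of_nonneg_left hm1 hl0.le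
  have hms2 : lam * s < lam ^ (m + 1 + 1) := by
    rw [pow_succ']; exact mul_lt_mul_of_pos_left hm2 hl0
  have ht0 : (0:ℝ) ≤ t := le_trans one_pos.le ht
  have hs0 : (0:ℝ) ≤ s := le_trans one_pos.le hs
  have hlt0 : (0:ℝ) ≤ lam * t := mul_nonneg hl0.le ht0
  have hls0 : (0:ℝ) ≤ lam * s := mul_nonneg hl0.le hs0
  simp only [simpleBM_eq lam H hlam B (lam * t) (n+1) hnt1 hnt2,
    simpleBM_eq lam H hlam B (lam * s) (m+1) hms1 hms2,
    simpleBM_eq lam H hlam B t n hn1 hn2,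
    simpleBM_eq lam H hlam B s m hm1 hm2,
    integral_const_mul, hBmean t ht0, hBmean s hs0,
    hBmean _ hlt0, hBmean _ hls0, mul_zero, zero_mul, sub_zero]
  have key : ∀ (a b u v : ℝ), 0 ≤ u → 0 ≤ v →
      ∫ ω, a * B u ω * (b * B v ω) ∂μ = a * b * min u v := by
    intro a b u v hu hv
    calc ∫ ω, a * B u ω * (b * B v ω) ∂μ
        = ∫ ω, (a * b) * (B u ω * B v ω) ∂μ := by congr 1; ext ω; ring
      _ = (a * b) * ∫ ω, B u ω * B v ω ∂μ := integral_const_mul _ _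
      _ = a * b * min u v := by rw [hBcov u v hu hv]
  rw [key _ _ _ _ hlt0 hls0, key _ _ _ _ ht0 hs0]
  have hmin : min (lam * t) (lam * s) = lam * min t s := by
    rcases le_total t s with h | h
    · rw [min_eq_left h, min_eq_left (mul_le_mul_of_nonneg_left h hl0.le)]
    · rw [min_eq_right h, min_eq_right (mul_le_mul_of_nonneg_left h hl0.le)]
  rw [hmin]
  push_cast
  rw [show ((n:ℝ)+1+1)*(H-1/2) = ((n:ℝ)+1)*(H-1/2) + (H-1/2) by ring,
    show ((m:ℝ)+1+1)*(H-1/2) = ((m:ℝ)+1)*(H-1/2) + (H-1/2) by ring,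
    Real.rpow_add hl0, Real.rpow_add hl0,
    show (2*H : ℝ) = (H-1/2) + (H-1/2) + 1 by ring,
    Real.rpow_add hl0, Real.rpow_add hl0, Real.rpow_one]
  ring
end

section
/- The covariance of the simple Brownian motion satisfies the wide-sense Markov factorization criterion: for s ≤ t, Cov(X(t), X(s)) = G(s) K(t) where G(s) = λ^{m(H−1/2)} s for s ∈ [λ^{m−1}, λ^m) and K(t) = λ^{n(H−1/2)} for t ∈ [λ^{n−1}, λ^n), and the ratio G/K is positive and nondecreasing on [1, ∞). -/
open MeasureTheory

/-- `G(s) = λ^{m(H-1/2)} s` for `s ∈ [λ^{m-1}, λ^m)` (reindexed by `m ↦ m+1`). -/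
noncomputable def GBorisov (lam H : ℝ) (s : ℝ) : ℝ :=
  ∑' m : ℕ, Set.indicator (Set.Ico (lam ^ m) (lam ^ (m + 1)))
    (fun _ => lam ^ (((m : ℝ) + 1) * (H - 1 / 2)) * s) s

/-- `K(t) = λ^{n(H-1/2)}` for `t ∈ [λ^{n-1}, λ^n)` (reindexed by `n ↦ n+1`). -/
noncomputable def KBorisov (lam H : ℝ) (t : ℝ) : ℝ :=
  ∑' n : ℕ, Set.indicator (Set.Ico (lam ^ n) (lam ^ (n + 1)))
    (fun _ => lam ^ (((n : ℝ) + 1) * (H - 1 / 2))) t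

lemma exists_index {lam x : ℝ} (hlam : 1 < lam) (hx : 1 ≤ x) :
    ∃ n : ℕ, lam ^ n ≤ x ∧ x < lam ^ (n + 1) := by
  have hex : ∃ n : ℕ, x < lam ^ (n + 1) := by
    obtain ⟨n, hn⟩ := pow_unbounded_of_one_lt x hlam
    exact ⟨n, hn.trans_le (pow_le_pow_right₀ hlam.le (Nat.le_succ n))⟩
  classical
  refine ⟨Nat.find hex, ?_, Nat.find_spec hex⟩
  rcases Nat.eq_zero_or_pos (Nat.find hex) with h0 | hpos
  · rw [h0]; simpa using hx
  · obtain ⟨k, hk⟩ := Nat.exists_eq_succ_of_ne_zero (Nat.pos_iff_ne_zero.mp hpos)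
    have := Nat.find_min hex (m := k) (by omega)
    push_neg at this
    rw [hk]; exact this

lemma tsum_indicator_unique {lam x : ℝ} (hlam : 1 < lam) {n : ℕ}
    (h1 : lam ^ n ≤ x) (h2 : x < lam ^ (n + 1)) (c : ℕ → ℝ) :
    ∑' k : ℕ, Set.indicator (Set.Ico (lam ^ k) (lam ^ (k + 1))) (fun _ => c k) x = c n := by
  have hlam0 : (1:ℝ) ≤ lam := hlam.le
  rw [tsum_eq_single n]
  · rw [Set.indicator_of_mem (Set.mem_Ico.mpr ⟨h1, h2⟩)]
  · intro k hk
    apply Set.indicator_of_notMem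
    rcases lt_or_gt_of_ne hk with h | h
    · intro hmem
      have : lam ^ (k + 1) ≤ lam ^ n := pow_le_pow_right₀ hlam0 h
      exact absurd (this.trans h1) (not_le.mpr hmem.2)
    · intro hmem
      have : lam ^ (n + 1) ≤ lam ^ k := pow_le_pow_right₀ hlam0 h
      exact absurd (h2.trans_le this) (not_lt.mpr hmem.1)

theorem simpleBM_markov_factorization
    {Ω : Type*} [MeasurableSpace Ω] (μ : Measure Ω) [IsProbabilityMeasure μ]
    (lam H : ℝ) (hlam : 1 < lam) (hH : 0 < H)
    (B : ℝ → Ω → ℝ)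
    (hBmean : ∀ t : ℝ, 0 ≤ t → ∫ ω, B t ω ∂μ = 0)
    (hBcov : ∀ t s : ℝ, 0 ≤ t → 0 ≤ s → ∫ ω, B t ω * B s ω ∂μ = min t s) :
    (∀ t s : ℝ, 1 ≤ s → s ≤ t →
      (∫ ω, simpleBM lam H B t ω * simpleBM lam H B s ω ∂μ)
          - (∫ ω, simpleBM lam H B t ω ∂μ) * (∫ ω, simpleBM lam H B s ω ∂μ)
        = GBorisov lam H s * KBorisov lam H t) ∧
    (∀ x : ℝ, 1 ≤ x → 0 < GBorisov lam H x / KBorisov lam H x) ∧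
    (∀ x y : ℝ, 1 ≤ x → x ≤ y →
      GBorisov lam H x / KBorisov lam H x ≤ GBorisov lam H y / KBorisov lam H y) := by
  have hlam0 : (0:ℝ) < lam := lt_trans zero_lt_one hlam
  -- for each x ≥ 1 pick the index
  have key : ∀ x : ℝ, 1 ≤ x → ∃ n : ℕ,
      (∀ ω, simpleBM lam H B x ω = lam ^ (((n : ℝ) + 1) * (H - 1 / 2)) * B x ω) ∧
      GBorisov lam H x = lam ^ (((n : ℝ) + 1) * (H - 1 / 2)) * x ∧
      KBorisov lam H x = lam ^ (((n : ℝ) + 1) * (H - 1 / 2)) := by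
    intro x hx
    obtain ⟨n, h1, h2⟩ := exists_index hlam hx
    refine ⟨n, fun ω => ?_, ?_, ?_⟩
    · exact tsum_indicator_unique hlam h1 h2
        (fun k => lam ^ (((k : ℝ) + 1) * (H - 1 / 2)) * B x ω)
    · exact tsum_indicator_unique hlam h1 h2
        (fun k => lam ^ (((k : ℝ) + 1) * (H - 1 / 2)) * x)
    · exact tsum_indicator_unique hlam h1 h2
        (fun k => lam ^ (((k : ℝ) + 1) * (H - 1 / 2)))
  refine ⟨?_, ?_, ?_⟩
  · intro t s hs hst
    have ht : (1:ℝ) ≤ t := hs.trans hst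
    obtain ⟨n, hXt, hGt, hKt⟩ := key t ht
    obtain ⟨m, hXs, hGs, hKs⟩ := key s hs
    set a := lam ^ (((n : ℝ) + 1) * (H - 1 / 2)) with ha
    set b := lam ^ (((m : ℝ) + 1) * (H - 1 / 2)) with hb
    have e1 : (∫ ω, simpleBM lam H B t ω * simpleBM lam H B s ω ∂μ)
        = a * b * s := by
      have : (fun ω => simpleBM lam H B t ω * simpleBM lam H B s ω)
          = fun ω => (a * b) * (B t ω * B s ω) := by
        funext ω; rw [hXt ω, hXs ω]; ring
      rw [this, integral_const_mul, hBcov t s (by linarith) (by linarith),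
        min_eq_right hst]
    have e2 : (∫ ω, simpleBM lam H B t ω ∂μ) = 0 := by
      have : (fun ω => simpleBM lam H B t ω) = fun ω => a * B t ω := funext hXt
      rw [this, integral_const_mul, hBmean t (by linarith), mul_zero]
    rw [e1, e2, hGs, hKt]; ring
  · intro x hx
    obtain ⟨n, _, hG, hK⟩ := key x hx
    have hpos : 0 < lam ^ (((n : ℝ) + 1) * (H - 1 / 2)) := Real.rpow_pos_of_pos hlam0 _
    rw [hG, hK, mul_comm, mul_div_assoc, div_self hpos.ne', mul_one]
    linarith
  · intro x y hx hxy
    obtain ⟨n, _, hGx, hKx⟩ := key x hx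
    obtain ⟨m, _, hGy, hKy⟩ := key y (hx.trans hxy)
    have hpx : 0 < lam ^ (((n : ℝ) + 1) * (H - 1 / 2)) := Real.rpow_pos_of_pos hlam0 _
    have hpy : 0 < lam ^ (((m : ℝ) + 1) * (H - 1 / 2)) := Real.rpow_pos_of_pos hlam0 _
    rw [hGx, hKx, hGy, hKy, mul_comm _ x, mul_comm _ y, mul_div_assoc,
      div_self hpx.ne', mul_one, mul_div_assoc, div_self hpy.ne', mul_one]
    exact hxy
end

section
/- For the simple Brownian motion sampled at α^j with λ = α^T: if j = kT + i with 0 ≤ i ≤ T−2 then h(α^j) := R_j^H(1)/R_j^H(0) = 1, and if j = kT + T − 1 then h(α^j) = α^{T(H−1/2)}, where R_j^H(τ) = Cov(X(α^{j+τ}), X(α^j)). -/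
open MeasureTheory

/-- `R_j^H(τ) = Cov(X(α^{j+τ}), X(α^j))` for the simple BM sampled at powers of `α`. -/
noncomputable def covSample {Ω : Type*} [MeasurableSpace Ω] (μ : Measure Ω)
    (lam H α : ℝ) (B : ℝ → Ω → ℝ) (j τ : ℕ) : ℝ :=
  (∫ ω, simpleBM lam H B (α ^ (j + τ)) ω * simpleBM lam H B (α ^ j) ω ∂μ)
    - (∫ ω, simpleBM lam H B (α ^ (j + τ)) ω ∂μ) *
      (∫ ω, simpleBM lam H B (α ^ j) ω ∂μ)

lemma j_lt_aux (j T : ℕ) (hT : 0 < T) : j < T * (j / T + 1) := by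
  have h1 := Nat.div_add_mod j T
  have h2 := Nat.mod_lt j hT
  have h3 : T * (j / T + 1) = T * (j / T) + T := by ring
  omega

lemma simpleBM_pow_eval {Ω : Type*} (α H : ℝ) (T : ℕ) (hα : 1 < α) (hT : 1 ≤ T)
    (B : ℝ → Ω → ℝ) (j : ℕ) (ω : Ω) :
    simpleBM (α ^ T) H B (α ^ j) ω
      = (α ^ T) ^ ((((j / T : ℕ) : ℝ) + 1) * (H - 1 / 2)) * B (α ^ j) ω := by
  have hT0 : 0 < T := hT
  unfold simpleBM
  rw [tsum_eq_single (j / T)]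
  · rw [Set.indicator_of_mem]
    constructor
    · rw [← pow_mul]
      exact pow_le_pow_right₀ hα.le (Nat.mul_div_le j T)
    · rw [← pow_mul]
      exact pow_lt_pow_right₀ hα (j_lt_aux j T hT0)
  · intro n hn
    apply Set.indicator_of_notMem
    rcases lt_or_gt_of_ne hn with h | h
    · intro hmem
      have h2 : (α ^ T) ^ (n + 1) ≤ α ^ j := by
        rw [← pow_mul]
        apply pow_le_pow_right₀ hα.le
        have h3 : T * (n + 1) ≤ T * (j / T) := Nat.mul_le_mul_left T h
        have h4 : T * (j / T) ≤ j := Nat.mul_div_le j T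
        omega
      exact absurd hmem.2 (not_lt.mpr h2)
    · intro hmem
      have h2 : α ^ j < (α ^ T) ^ n := by
        rw [← pow_mul]
        apply pow_lt_pow_right₀ hα
        have h0 := j_lt_aux j T hT0
        have h3 : T * (j / T + 1) ≤ T * n := Nat.mul_le_mul_left T h
        omega
      exact absurd hmem.1 (not_le.mpr h2)

lemma covSample_formula {Ω : Type*} [MeasurableSpace Ω] (μ : Measure Ω) [IsProbabilityMeasure μ]
    (α H : ℝ) (T : ℕ) (hα : 1 < α) (hT : 1 ≤ T)
    (B : ℝ → Ω → ℝ)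
    (hBmean : ∀ t : ℝ, 0 ≤ t → ∫ ω, B t ω ∂μ = 0)
    (hBcov : ∀ t s : ℝ, 0 ≤ t → 0 ≤ s → ∫ ω, B t ω * B s ω ∂μ = min t s)
    (j τ : ℕ) :
    covSample μ (α ^ T) H α B j τ
      = (α ^ T) ^ (((((j + τ) / T : ℕ) : ℝ) + 1) * (H - 1 / 2))
        * (α ^ T) ^ ((((j / T : ℕ) : ℝ) + 1) * (H - 1 / 2)) * α ^ j := by
  have h0 : (0:ℝ) < α := lt_trans one_pos hα
  have hjt : (0:ℝ) ≤ α ^ (j + τ) := (pow_pos h0 _).le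
  have hj : (0:ℝ) ≤ α ^ j := (pow_pos h0 _).le
  unfold covSample
  have e1 : ∀ ω, simpleBM (α ^ T) H B (α ^ (j + τ)) ω
      = (α ^ T) ^ (((((j + τ) / T : ℕ) : ℝ) + 1) * (H - 1 / 2)) * B (α ^ (j + τ)) ω :=
    fun ω => simpleBM_pow_eval α H T hα hT B (j + τ) ω
  have e2 : ∀ ω, simpleBM (α ^ T) H B (α ^ j) ω
      = (α ^ T) ^ ((((j / T : ℕ) : ℝ) + 1) * (H - 1 / 2)) * B (α ^ j) ω :=
    fun ω => simpleBM_pow_eval α H T hα hT B j ω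
  simp only [e1, e2]
  set c1 := (α ^ T) ^ (((((j + τ) / T : ℕ) : ℝ) + 1) * (H - 1 / 2)) with hc1
  set c2 := (α ^ T) ^ ((((j / T : ℕ) : ℝ) + 1) * (H - 1 / 2)) with hc2
  have key : ∀ ω, (c1 * B (α ^ (j + τ)) ω) * (c2 * B (α ^ j) ω)
      = c1 * (c2 * (B (α ^ (j + τ)) ω * B (α ^ j) ω)) := fun ω => by ring
  simp only [key]
  rw [integral_const_mul, integral_const_mul, integral_const_mul, integral_const_mul,
    hBcov _ _ hjt hj, hBmean _ hjt, hBmean _ hj]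
  have hmin : min (α ^ (j + τ)) (α ^ j) = α ^ j :=
    min_eq_right (pow_le_pow_right₀ hα.le (Nat.le_add_right j τ))
  rw [hmin]
  ring

theorem simpleBM_h_values
    {Ω : Type*} [MeasurableSpace Ω] (μ : Measure Ω) [IsProbabilityMeasure μ]
    (α H : ℝ) (T : ℕ) (hα : 1 < α) (hH : 0 < H) (hT : 1 ≤ T)
    (B : ℝ → Ω → ℝ)
    (hBmean : ∀ t : ℝ, 0 ≤ t → ∫ ω, B t ω ∂μ = 0)
    (hBcov : ∀ t s : ℝ, 0 ≤ t → 0 ≤ s → ∫ ω, B t ω * B s ω ∂μ = min t s) :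
    (∀ k i : ℕ, i + 2 ≤ T →
      covSample μ (α ^ T) H α B (k * T + i) 1 / covSample μ (α ^ T) H α B (k * T + i) 0
        = 1) ∧
    (∀ k : ℕ,
      covSample μ (α ^ T) H α B (k * T + T - 1) 1 /
          covSample μ (α ^ T) H α B (k * T + T - 1) 0
        = α ^ ((T : ℝ) * (H - 1 / 2))) := by
  have h0 : (0:ℝ) < α := lt_trans one_pos hα
  have hT0 : 0 < T := hT
  have hlam : (0:ℝ) < α ^ T := pow_pos h0 T
  have F := covSample_formula μ α H T hα hT B hBmean hBcov
  constructor
  · intro k i hi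
    set j := k * T + i with hj
    have d1 : (j + 1) / T = k := by
      have : j + 1 = (i + 1) + k * T := by omega
      rw [this, Nat.add_mul_div_right _ _ hT0, Nat.div_eq_of_lt (by omega), Nat.zero_add]
    have d2 : j / T = k := by
      have : j = i + k * T := by omega
      rw [this, Nat.add_mul_div_right _ _ hT0, Nat.div_eq_of_lt (by omega), Nat.zero_add]
    rw [F j 1, F j 0]
    simp only [Nat.add_zero, d1, d2]
    apply div_self
    positivity
  · intro k
    set j := k * T + T - 1 with hj
    have d1 : (j + 1) / T = k + 1 := by
      have e : (k + 1) * T = k * T + T := by ring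
      have : j + 1 = (k + 1) * T := by omega
      rw [this, Nat.mul_div_cancel _ hT0]
    have d2 : j / T = k := by
      have : j = (T - 1) + k * T := by omega
      rw [this, Nat.add_mul_div_right _ _ hT0, Nat.div_eq_of_lt (by omega), Nat.zero_add]
    rw [F j 1, F j 0]
    simp only [Nat.add_zero, d1, d2]
    push_cast
    set X := α ^ ((T : ℝ) * (H - 1 / 2)) with hX
    have hA : (α ^ T : ℝ) ^ (((k:ℝ) + 1 + 1) * (H - 1 / 2))
        = X * (α ^ T : ℝ) ^ (((k:ℝ) + 1) * (H - 1 / 2)) := by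
      have e : ((k:ℝ) + 1 + 1) * (H - 1 / 2)
          = (H - 1 / 2) + ((k:ℝ) + 1) * (H - 1 / 2) := by ring
      rw [e, Real.rpow_add hlam]
      congr 1
      rw [hX, Real.rpow_mul h0.le, Real.rpow_natCast]
    rw [hA]
    have hden : (α ^ T : ℝ) ^ (((k:ℝ) + 1) * (H - 1 / 2))
        * (α ^ T : ℝ) ^ (((k:ℝ) + 1) * (H - 1 / 2)) * α ^ j ≠ 0 := by positivity
    rw [div_eq_iff hden]
    ring
end
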